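/- arXiv:1301.5296 — 2 statements merged into one kernel-verified Lean document; each statement's English description precedes it below -/
import Mathlib

section
/- Let G be a finite simple graph and f a demand function for G. The following statements are equivalent: (a) G has an f-coloring; (b) there exists a common denominator N for f such that G has an (f, N)-coloring; (c) for every weight function w : V(G) → ℝ, the graph G contains an independent set X such that w(X) ≥ w_f; (d) for every nonnegative weight function w : V(G) → ℝ, the graph G contains an independent set X such that w(X) ≥ w_f. -/
/-- `N` is a common denominator for the demand function `f`. -/
def IsCommonDenom {V : Type} (f : V → ℚ) (N : ℕ) : Prop :=
  0 < N ∧ ∀ v, ∃ k : ℤ, (N : ℚ) * f v = (k : ℚ)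

/-- `ψ` is an `(f, N)`-coloring of `G`: each vertex gets a subset of `{1, …, N}` of size at
least `N·f(v)`, with adjacent vertices receiving disjoint sets. -/
def IsFNColoring {V : Type} (G : SimpleGraph V) (f : V → ℚ) (N : ℕ)
    (ψ : V → Finset ℕ) : Prop :=
  (∀ v, ψ v ⊆ Finset.Icc 1 N) ∧
  (∀ v, (N : ℚ) * f v ≤ ((ψ v).card : ℚ)) ∧
  ∀ u v, G.Adj u v → Disjoint (ψ u) (ψ v)

/-- `G` has an `(f, N)`-coloring. -/
def HasFNColoring {V : Type} (G : SimpleGraph V) (f : V → ℚ) (N : ℕ) : Prop :=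
  ∃ ψ : V → Finset ℕ, IsFNColoring G f N ψ

/-- `G` has an `f`-coloring: an assignment of measurable subsets of `[0,1]` of measure at
least `f(v)` to the vertices, with adjacent vertices receiving disjoint sets. -/
def HasFColoring {V : Type} (G : SimpleGraph V) (f : V → ℚ) : Prop :=
  ∃ φ : V → Set ℝ,
    (∀ v, MeasurableSet (φ v)) ∧
    (∀ v, φ v ⊆ Set.Icc 0 1) ∧
    (∀ v, (f v : ℝ) ≤ (MeasureTheory.volume (φ v)).toReal) ∧
    ∀ u v, G.Adj u v → φ u ∩ φ v = ∅

/-!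
(a) ⇒ (d): for `w ≥ 0`, integrate `x ↦ ∑_{v : x ∈ φ v} w v` over `[0, 1]`; the integral is at
least `w_f`, while at every point the integrand is the weight of an independent set.
(d) ⇒ (c): apply (d) to `max w 0` and drop the vertices of negative weight.
(d) ⇒ (b) is LP duality. Farkas' lemma, proved by Fourier–Motzkin elimination over an arbitrary
ordered field and hence valid over `ℚ`, yields either a rational fractional cover of `f` by
independent sets of total weight at most `1`, or nonnegative vertex weights violating (d).
Scaling the cover by a common denominator `N` gives integer multiplicities, and handing out
disjoint blocks of colours to the copies of the independent sets is an `(f, N)`-coloring.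
(b) ⇒ (a): colour `i` becomes the interval `[(i - 1)/N, i/N)`.
-/

open Finset Function Matrix MeasureTheory

theorem Finset.exists_forall_le_forall_le {α β : Type*} [LinearOrder α] [Nonempty α]
    {s t : Finset β} {l u : β → α} (h : ∀ i ∈ s, ∀ j ∈ t, l i ≤ u j) :
    ∃ c, (∀ i ∈ s, l i ≤ c) ∧ ∀ j ∈ t, c ≤ u j := by
  rcases s.eq_empty_or_nonempty with rfl | hs
  · obtain ⟨c, hc⟩ := (t.image u).bddBelow
    exact ⟨c, by simp, fun j hj => hc (mem_coe.2 (mem_image_of_mem u hj))⟩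
  · exact ⟨s.sup' hs l, fun i hi => le_sup' l hi, fun j hj => sup'_le hs l fun i hi => h i hi j hj⟩

theorem Matrix.mulVec_snoc {R ι : Type*} [CommSemiring R] {n : ℕ} (A : Matrix ι (Fin (n + 1)) R)
    (x : Fin n → R) (t : R) :
    A *ᵥ Fin.snoc x t = A.submatrix id Fin.castSucc *ᵥ x + t • fun i => A i (Fin.last n) := by
  ext i
  simp [mulVec, dotProduct, Fin.sum_univ_castSucc, mul_comm]

section Farkas

variable {K : Type*} [Field K] [LinearOrder K]

theorem exists_forall_mul_le [IsStrictOrderedRing K] {ι : Type*} [Fintype ι] (a c : ι → K)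
    (hzero : ∀ i, a i = 0 → 0 ≤ c i)
    (hpair : ∀ p q, 0 < a p → a q < 0 → a q * c p ≤ a p * c q) :
    ∃ t, ∀ i, a i * t ≤ c i := by
  classical
  obtain ⟨t, hlow, hup⟩ := Finset.exists_forall_le_forall_le
    (s := {q | a q < 0}) (t := {p | 0 < a p}) (l := fun i => c i / a i) (u := fun i => c i / a i)
    (by
      intro q hq p hp
      simp only [mem_filter, mem_univ, true_and] at hq hp
      rw [div_le_iff_of_neg hq, div_mul_eq_mul_div, div_le_iff₀ hp]
      linarith [hpair p q hp hq])
  refine ⟨t, fun i => ?_⟩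
  rcases lt_trichotomy (a i) 0 with hi | hi | hi
  · have := hlow i (by simp [hi])
    rw [div_le_iff_of_neg hi] at this
    linarith
  · simpa [hi] using hzero i hi
  · have := hup i (by simp [hi])
    rw [le_div_iff₀ hi] at this
    linarith

namespace FourierMotzkin

variable {ι : Type*} [DecidableEq ι] (a : ι → K)

abbrev Row : Type _ := {pq : ι × ι // 0 < a pq.1 ∧ a pq.2 < 0} ⊕ {i // a i = 0}

/-- Row `k` of the system with the variable of coefficient column `a` eliminated is the
nonnegative combination `multipliers a k` of the original rows. -/
def multipliers : Matrix (Row a) ι K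
  | .inl pq => Pi.single pq.1.1 (-a pq.1.2) + Pi.single pq.1.2 (a pq.1.1)
  | .inr i => Pi.single i.1 1

variable {a}

theorem multipliers_nonneg [IsStrictOrderedRing K] (k : Row a) (i : ι) :
    0 ≤ multipliers a k i := by
  rcases k with ⟨⟨p, q⟩, hp, hq⟩ | ⟨j, hj⟩
  · simp only [multipliers, Pi.add_apply, Pi.single_apply]
    split_ifs <;> linarith
  · simp only [multipliers, Pi.single_apply]
    split_ifs <;> norm_num

theorem multipliers_mulVec_inl [Fintype ι] (pq : {pq : ι × ι // 0 < a pq.1 ∧ a pq.2 < 0})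
    (z : ι → K) :
    (multipliers a *ᵥ z) (.inl pq) = -a pq.1.2 * z pq.1.1 + a pq.1.1 * z pq.1.2 := by
  simp [multipliers, mulVec, dotProduct, add_mul, sum_add_distrib, Pi.single_apply]

theorem multipliers_mulVec_inr [Fintype ι] (i : {i // a i = 0}) (z : ι → K) :
    (multipliers a *ᵥ z) (.inr i) = z i := by
  simp [multipliers, mulVec]

theorem multipliers_mulVec_self [Fintype ι] : multipliers a *ᵥ a = 0 := by
  ext (⟨⟨p, q⟩, _⟩ | ⟨i, hi⟩)
  · rw [multipliers_mulVec_inl]; simp; ring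
  · rw [multipliers_mulVec_inr]; simpa using hi

variable [IsStrictOrderedRing K] [Fintype ι] {n : ℕ} (A : Matrix ι (Fin (n + 1)) K) (b : ι → K)

theorem exists_mulVec_le_of_eliminated
    (h : ∃ x, (multipliers (fun i => A i (Fin.last n)) * A.submatrix id Fin.castSucc) *ᵥ x ≤
      multipliers (fun i => A i (Fin.last n)) *ᵥ b) :
    ∃ x, A *ᵥ x ≤ b := by
  set a := fun i => A i (Fin.last n)
  obtain ⟨x, hx⟩ := h
  set S := A.submatrix id Fin.castSucc *ᵥ x
  rw [← mulVec_mulVec] at hx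
  obtain ⟨t, ht⟩ := exists_forall_mul_le a (b - S)
    (fun i hi => by simpa [multipliers_mulVec_inr] using sub_nonneg.2 (hx (.inr ⟨i, hi⟩)))
    (fun p q hp hq => by
      have := hx (.inl ⟨(p, q), hp, hq⟩)
      simp only [multipliers_mulVec_inl] at this
      simp only [Pi.sub_apply]
      linear_combination this)
  refine ⟨Fin.snoc x t, fun i => ?_⟩
  have := ht i
  simp only [mulVec_snoc, Pi.add_apply, Pi.smul_apply, smul_eq_mul, Pi.sub_apply] at this ⊢
  linarith

theorem exists_certificate_of_eliminated
    (h : ∃ y, 0 ≤ y ∧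
      y ᵥ* (multipliers (fun i => A i (Fin.last n)) * A.submatrix id Fin.castSucc) = 0 ∧
      y ⬝ᵥ (multipliers (fun i => A i (Fin.last n)) *ᵥ b) < 0) :
    ∃ y, 0 ≤ y ∧ y ᵥ* A = 0 ∧ y ⬝ᵥ b < 0 := by
  set M := multipliers (fun i => A i (Fin.last n))
  obtain ⟨y, hy, hyA, hyb⟩ := h
  refine ⟨y ᵥ* M, fun i => sum_nonneg fun k _ => mul_nonneg (hy k) (multipliers_nonneg k i),
    ?_, by rwa [← dotProduct_mulVec]⟩
  ext j
  induction j using Fin.lastCases with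
  | last =>
    change (y ᵥ* M) ⬝ᵥ (fun i => A i (Fin.last n)) = 0
    rw [← dotProduct_mulVec, multipliers_mulVec_self, dotProduct_zero]
  | cast j =>
    change (y ᵥ* M ᵥ* A.submatrix id Fin.castSucc) j = 0
    rw [vecMul_vecMul, hyA, Pi.zero_apply]

end FourierMotzkin

variable [IsStrictOrderedRing K]

theorem Matrix.exists_mulVec_le_or_exists_vecMul_eq_zero_of_fin :
    ∀ (n : ℕ) {ι : Type*} [Fintype ι] (A : Matrix ι (Fin n) K) (b : ι → K),
      (∃ x, A *ᵥ x ≤ b) ∨ ∃ y, 0 ≤ y ∧ y ᵥ* A = 0 ∧ y ⬝ᵥ b < 0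
  | 0, ι, _, A, b => by
    classical
    by_cases hb : 0 ≤ b
    · exact .inl ⟨0, by simpa using hb⟩
    · obtain ⟨i, hi⟩ : ∃ i, b i < 0 := by simpa [Pi.le_def] using hb
      exact .inr ⟨Pi.single i 1, Pi.single_nonneg.2 zero_le_one, Subsingleton.elim _ _,
        by simpa using hi⟩
  | n + 1, ι, _, A, b => by
    classical
    exact (exists_mulVec_le_or_exists_vecMul_eq_zero_of_fin n _ _).imp
      (FourierMotzkin.exists_mulVec_le_of_eliminated A b)
      (FourierMotzkin.exists_certificate_of_eliminated A b)

theorem Matrix.exists_mulVec_le_or_exists_vecMul_eq_zero {ι J : Type*} [Fintype ι] [Fintype J]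
    (A : Matrix ι J K) (b : ι → K) :
    (∃ x, A *ᵥ x ≤ b) ∨ ∃ y, 0 ≤ y ∧ y ᵥ* A = 0 ∧ y ⬝ᵥ b < 0 := by
  set e := Fintype.equivFin J
  refine (exists_mulVec_le_or_exists_vecMul_eq_zero_of_fin _ (A.submatrix id e.symm) b).imp
    (fun ⟨x, hx⟩ => ⟨x ∘ e, by simpa [submatrix_mulVec_equiv] using hx⟩)
    (fun ⟨y, hy, hyA, hyb⟩ =>
      ⟨y, hy, funext fun j => by rw [← e.symm_apply_apply j]; exact congrFun hyA (e j), hyb⟩)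

theorem Matrix.exists_nonneg_mulVec_le_or_exists_vecMul_nonneg {ι J : Type*} [Fintype ι]
    [Fintype J] (A : Matrix ι J K) (b : ι → K) :
    (∃ x, 0 ≤ x ∧ A *ᵥ x ≤ b) ∨ ∃ y, 0 ≤ y ∧ 0 ≤ y ᵥ* A ∧ y ⬝ᵥ b < 0 := by
  classical
  rcases exists_mulVec_le_or_exists_vecMul_eq_zero (A.fromRows (-1 : Matrix J J K))
    (Sum.elim b 0) with ⟨x, hx⟩ | ⟨y, hy, hyA, hyb⟩
  · simp only [fromRows_mulVec, Sum.elim_le_elim_iff, neg_mulVec, one_mulVec, neg_nonpos] at hx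
    exact .inl ⟨x, hx.symm⟩
  · right
    rw [vecMul_fromRows, vecMul_neg, vecMul_one, ← sub_eq_add_neg, sub_eq_zero] at hyA
    rw [← Sum.elim_comp_inl_inr y, sumElim_dotProduct_sumElim, dotProduct_zero, add_zero] at hyb
    exact ⟨y ∘ Sum.inl, fun i => hy _, hyA ▸ fun j => hy _, hyb⟩

end Farkas

theorem SimpleGraph.isIndepSet_coe_iff {V : Type*} {G : SimpleGraph V} {X : Finset V} :
    G.IsIndepSet (X : Set V) ↔ ∀ u ∈ X, ∀ v ∈ X, ¬ G.Adj u v :=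
  ⟨fun h _ hu _ hv huv => h hu hv huv.ne huv, fun h _ hu _ hv _ => h _ hu _ hv⟩

theorem pairwise_disjoint_Ico_sub_one_div (N : ℕ) :
    Pairwise (Disjoint on fun i : ℕ => Set.Ico (((i : ℝ) - 1) / N) (i / N)) := by
  have hmono : Monotone fun i : ℕ => ((i : ℝ) - 1) / N := fun _ _ hij =>
    div_le_div_of_nonneg_right (sub_le_sub_right (Nat.cast_le.2 hij) 1) (Nat.cast_nonneg N)
  simpa [Order.succ_eq_add_one] using hmono.pairwise_disjoint_on_Ico_succ

variable {V : Type} {G : SimpleGraph V} {f : V → ℚ}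

theorem HasFNColoring.hasFColoring {N : ℕ} (hN : 0 < N) (h : HasFNColoring G f N) :
    HasFColoring G f := by
  obtain ⟨ψ, hsub, hcard, hdisj⟩ := h
  have hN' : (0 : ℝ) < N := by exact_mod_cast hN
  refine ⟨fun v => ⋃ i ∈ ψ v, Set.Ico (((i : ℝ) - 1) / N) (i / N),
    fun v => (ψ v).measurableSet_biUnion fun _ _ => measurableSet_Ico,
    fun v => Set.iUnion₂_subset fun i hi => ?_, fun v => ?_, fun u v huv => ?_⟩
  · have hi := Finset.mem_Icc.1 (hsub v hi)
    refine Set.Ico_subset_Icc_self.trans (Set.Icc_subset_Icc ?_ ?_)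
    · exact div_nonneg (by simpa using hi.1) hN'.le
    · exact (div_le_one hN').2 (by exact_mod_cast hi.2)
  · rw [measure_biUnion_finset (fun i _ j _ hij => pairwise_disjoint_Ico_sub_one_div N hij)
      fun _ _ => measurableSet_Ico]
    have hslot : ∀ i : ℕ,
        volume (Set.Ico (((i : ℝ) - 1) / N) (i / N)) = ENNReal.ofReal (N : ℝ)⁻¹ :=
      fun i => by rw [Real.volume_Ico]; ring_nf
    simp only [hslot, sum_const, nsmul_eq_mul, ENNReal.toReal_mul, ENNReal.toReal_natCast,
      ENNReal.toReal_ofReal (inv_nonneg.2 hN'.le)]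
    rw [← div_eq_mul_inv, le_div_iff₀ hN', mul_comm]
    exact_mod_cast hcard v
  · rw [← Set.disjoint_iff_inter_eq_empty, Set.disjoint_iUnion₂_left]
    intro i hi
    rw [Set.disjoint_iUnion₂_right]
    intro j hj
    exact pairwise_disjoint_Ico_sub_one_div N (ne_of_mem_of_not_mem hi
      (Finset.disjoint_right.1 (hdisj u v huv) hj))

theorem HasFColoring.exists_isIndepSet_le_sum [Fintype V] (h : HasFColoring G f) (w : V → ℝ)
    (hw : ∀ v, 0 ≤ w v) : ∃ X : Finset V, G.IsIndepSet X ∧ ∑ v, (f v : ℝ) * w v ≤ ∑ v ∈ X, w v := by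
  classical
  obtain ⟨φ, hmeas, hsub, hvol, hdisj⟩ := h
  obtain ⟨X, hX, hmax⟩ := (univ.filter fun X : Finset V => G.IsIndepSet X).exists_max_image
    (fun X => ∑ v ∈ X, w v) ⟨∅, by simp⟩
  refine ⟨X, (mem_filter.1 hX).2, ?_⟩
  set μ := volume.restrict (Set.Icc (0 : ℝ) 1)
  have hμφ : ∀ v, μ.real (φ v) = volume.real (φ v) := fun v => by
    rw [measureReal_restrict_apply (hmeas v), Set.inter_eq_left.2 (hsub v)]
  have hfiber : ∀ x, ∑ v, (φ v).indicator (fun _ => w v) x ≤ ∑ v ∈ X, w v := fun x => by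
    simp only [Set.indicator_apply, ← sum_filter]
    refine hmax _ (mem_filter.2 ⟨mem_univ _, fun u hu v hv _ huv => ?_⟩)
    simp only [coe_filter, mem_univ, true_and, Set.mem_ofPred_eq] at hu hv
    exact (Set.eq_empty_iff_forall_notMem.1 (hdisj u v huv)) x ⟨hu, hv⟩
  calc ∑ v, (f v : ℝ) * w v ≤ ∑ v, μ.real (φ v) * w v :=
        sum_le_sum fun v _ => mul_le_mul_of_nonneg_right (by rw [hμφ]; exact hvol v) (hw v)
    _ = ∫ x, ∑ v, (φ v).indicator (fun _ => w v) x ∂μ := by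
        rw [integral_finsetSum _ fun v _ => (integrable_const _).indicator (hmeas v)]
        simp [integral_indicator_const _ (hmeas _)]
    _ ≤ ∫ _, ∑ v ∈ X, w v ∂μ :=
        integral_mono (integrable_finsetSum _ fun v _ => (integrable_const _).indicator (hmeas v))
          (integrable_const _) hfiber
    _ = ∑ v ∈ X, w v := by simp [μ]

theorem exists_isIndepSet_le_sum_of_nonneg {V : Type*} [Fintype V] {G : SimpleGraph V}
    {d : V → ℝ} (hd : ∀ v, 0 ≤ d v)
    (h : ∀ w : V → ℝ, (∀ v, 0 ≤ w v) →
      ∃ X : Finset V, G.IsIndepSet X ∧ ∑ v, d v * w v ≤ ∑ v ∈ X, w v)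
    (w : V → ℝ) : ∃ X : Finset V, G.IsIndepSet X ∧ ∑ v, d v * w v ≤ ∑ v ∈ X, w v := by
  classical
  obtain ⟨X, hX, hle⟩ := h (fun v => max (w v) 0) fun v => le_max_right _ _
  refine ⟨X.filter (0 ≤ w ·), hX.mono (coe_subset.2 (filter_subset _ X)), ?_⟩
  calc ∑ v, d v * w v ≤ ∑ v, d v * max (w v) 0 :=
        sum_le_sum fun v _ => mul_le_mul_of_nonneg_left (le_max_left _ _) (hd v)
    _ ≤ ∑ v ∈ X, max (w v) 0 := hle
    _ = ∑ v ∈ X.filter (0 ≤ w ·), w v := by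
        rw [sum_filter]
        exact sum_congr rfl fun v _ => by split_ifs with h <;> simp [h, le_of_not_ge]

theorem exists_isCommonDenom {ι : Type} [Fintype ι] (q : ι → ℚ) : ∃ N, IsCommonDenom q N := by
  classical
  refine ⟨∏ i, (q i).den, prod_pos fun i _ => (q i).den_pos, fun i => ?_⟩
  refine ⟨(∏ j ∈ univ.erase i, (q j).den : ℕ) * (q i).num, ?_⟩
  rw [← prod_erase_mul _ _ (mem_univ i), Nat.cast_mul, mul_assoc, Rat.den_mul_eq_num]
  push_cast
  rfl

section FractionalCover

open scoped Classical

def IsFractionalCover {V : Type} [Fintype V] (G : SimpleGraph V) (f : V → ℚ)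
    (c : {X : Finset V // G.IsIndepSet (X : Set V)} → ℚ) : Prop :=
  0 ≤ c ∧ ∑ X, c X ≤ 1 ∧ ∀ v, f v ≤ ∑ X with v ∈ X.1, c X

variable {V : Type} [Fintype V] {G : SimpleGraph V} {f : V → ℚ}

theorem exists_isFractionalCover
    (h : ∀ w : V → ℝ, (∀ v, 0 ≤ w v) →
      ∃ X : Finset V, G.IsIndepSet X ∧ ∑ v, (f v : ℝ) * w v ≤ ∑ v ∈ X, w v) :
    ∃ c, IsFractionalCover G f c := by
  classical
  let A : Matrix (Option V) {X : Finset V // G.IsIndepSet (X : Set V)} ℚ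
    | none, _ => 1
    | some v, X => if v ∈ X.1 then -1 else 0
  let b : Option V → ℚ
    | none => 1
    | some v => -f v
  rcases Matrix.exists_nonneg_mulVec_le_or_exists_vecMul_nonneg A b with
    ⟨c, hc, hcA⟩ | ⟨y, hy, hyA, hyb⟩
  · refine ⟨c, hc, by simpa [A, b, Matrix.mulVec, dotProduct] using hcA none, fun v => ?_⟩
    simpa [A, b, Matrix.mulVec, dotProduct, ← sum_filter, sum_neg_distrib] using hcA (some v)
  · exfalso
    obtain ⟨X, hX, hle⟩ := h (fun v => (y (some v) : ℝ)) fun v => by exact_mod_cast hy (some v)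
    have hX : ∑ v ∈ X, y (some v) ≤ y none := by
      simpa [A, Matrix.vecMul, dotProduct, Fintype.sum_option, sum_filter] using hyA ⟨X, hX⟩
    have hyb : y none < ∑ v, y (some v) * f v := by
      simpa [b, dotProduct, Fintype.sum_option] using hyb
    have hle : ∑ v, f v * y (some v) ≤ ∑ v ∈ X, y (some v) := by exact_mod_cast hle
    simp only [mul_comm (f _)] at hle
    linarith

theorem hasFNColoring_of_indepSet_multiplicities {N : ℕ}
    (m : {X : Finset V // G.IsIndepSet (X : Set V)} → ℕ)
    (hm : ∑ X, m X ≤ N) (hcover : ∀ v, (N : ℚ) * f v ≤ ∑ X with v ∈ X.1, (m X : ℚ)) :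
    HasFNColoring G f N := by
  classical
  obtain ⟨e⟩ : Nonempty ((Σ X, Fin (m X)) ↪ Fin N) :=
    Function.Embedding.nonempty_of_card_le (by simpa using hm)
  let color := e.trans (Fin.valEmbedding.trans (addRightEmbedding 1))
  refine ⟨fun v => ((univ.filter fun X => v ∈ X.1).sigma fun _ => univ).map color,
    fun v => ?_, fun v => ?_, fun u v huv => ?_⟩
  · intro i hi
    simp only [mem_map, mem_sigma] at hi
    obtain ⟨c, -, rfl⟩ := hi
    simp [color]
  · simpa [card_sigma] using hcover v
  · rw [disjoint_map, disjoint_left]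
    rintro ⟨X, k⟩ hu hv
    simp only [mem_sigma, mem_filter, mem_univ, and_true, true_and] at hu hv
    exact X.2 (mem_coe.2 hu) (mem_coe.2 hv) huv.ne huv

theorem IsFractionalCover.exists_hasFNColoring {c} (hc : IsFractionalCover G f c) :
    ∃ N, IsCommonDenom f N ∧ HasFNColoring G f N := by
  obtain ⟨hc0, hc1, hcover⟩ := hc
  obtain ⟨N, hN, hint⟩ := exists_isCommonDenom (Sum.elim f c)
  have hm : ∀ X, ∃ m : ℕ, (m : ℚ) = N * c X := fun X => by
    obtain ⟨k, hk : (N : ℚ) * c X = k⟩ := hint (.inr X)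
    have hk0 : (0 : ℚ) ≤ k := hk ▸ mul_nonneg (Nat.cast_nonneg N) (hc0 X)
    exact ⟨k.toNat, by rw [hk, ← Int.cast_natCast, Int.toNat_of_nonneg (by exact_mod_cast hk0)]⟩
  choose m hm using hm
  refine ⟨N, ⟨hN, fun v => hint (.inl v)⟩,
    hasFNColoring_of_indepSet_multiplicities m ?_ fun v => ?_⟩
  · have : (∑ X, m X : ℚ) ≤ N := by
      simpa [hm, ← mul_sum] using mul_le_mul_of_nonneg_left hc1 (Nat.cast_nonneg N)
    exact_mod_cast this
  · simpa [hm, ← mul_sum] using mul_le_mul_of_nonneg_left (hcover v) (Nat.cast_nonneg N)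

end FractionalCover

/-- For a finite graph `G` and a demand function `f`, the following are equivalent:
(a) `G` has an `f`-coloring; (b) there is a common denominator `N` for `f` such that `G`
has an `(f, N)`-coloring; (c) for every weight function `w` there is an independent set
`X` with `w(X) ≥ w_f = Σ_v f(v)·w(v)`; (d) the same for every nonnegative weight
function. -/
theorem fColoring_equivalent_characterizations {V : Type} [Fintype V]
    (G : SimpleGraph V) (f : V → ℚ) (hf : ∀ v, 0 ≤ f v ∧ f v ≤ 1) :
    (HasFColoring G f ↔
      ∃ N : ℕ, IsCommonDenom f N ∧ HasFNColoring G f N) ∧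
    (HasFColoring G f ↔
      ∀ w : V → ℝ, ∃ X : Finset V, (∀ u ∈ X, ∀ v ∈ X, ¬ G.Adj u v) ∧
        (∑ v, (f v : ℝ) * w v) ≤ ∑ v ∈ X, w v) ∧
    (HasFColoring G f ↔
      ∀ w : V → ℝ, (∀ v, 0 ≤ w v) → ∃ X : Finset V, (∀ u ∈ X, ∀ v ∈ X, ¬ G.Adj u v) ∧
        (∑ v, (f v : ℝ) * w v) ≤ ∑ v ∈ X, w v) := by
  simp only [← SimpleGraph.isIndepSet_coe_iff]
  have ha_d := fun h : HasFColoring G f => h.exists_isIndepSet_le_sum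
  have hd_c := exists_isIndepSet_le_sum_of_nonneg (G := G) fun v => Rat.cast_nonneg.2 (hf v).1
  have hd_b := fun hd =>
    (exists_isFractionalCover (G := G) (f := f) hd).choose_spec.exists_hasFNColoring
  have hb_a : (∃ N, IsCommonDenom f N ∧ HasFNColoring G f N) → HasFColoring G f :=
    fun ⟨_, hN, h⟩ => h.hasFColoring hN.1
  exact ⟨⟨fun ha => hd_b (ha_d ha), hb_a⟩,
    ⟨fun ha => hd_c (ha_d ha), fun hc => hb_a (hd_b fun w _ => hc w)⟩,
    ⟨ha_d, fun hd => hb_a (hd_b hd)⟩⟩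
end

section
/- If a finite subcubic triangle-free graph G with a nail B is a minimal counterexample, then every vertex of G has degree at least two. -/
open SimpleGraph

/-- The degree of a vertex, as the number of neighbors. -/
noncomputable def degSet {V : Type} (G : SimpleGraph V) (v : V) : ℕ :=
  (G.neighborSet v).ncard

/-- A graph is subcubic if every vertex has degree at most 3. -/
def Subcubic {V : Type} (G : SimpleGraph V) : Prop := ∀ v, degSet G v ≤ 3

/-- A graph is triangle-free if it contains no 3-clique (equivalently no 3-cycle). -/
def TriangleFree {V : Type} (G : SimpleGraph V) : Prop := G.CliqueFree 3

/-- The graph `K'₄` obtained from `K₄` on vertices `0,1,2,3` by subdividing the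
perfect-matching edges `01` and `23` twice each, using new vertices `4,5` and `6,7`. -/
def K4' : SimpleGraph (Fin 8) :=
  SimpleGraph.fromRel (fun a b =>
    (a, b) ∈ [((0 : Fin 8), (2 : Fin 8)), (0, 3), (1, 2), (1, 3),
              (0, 4), (4, 5), (5, 1), (2, 6), (6, 7), (7, 3)])

/-- A graph is dangerous if it is a 5-cycle or `K'₄`. -/
def IsDangerous {W : Type} (H : SimpleGraph W) : Prop :=
  Nonempty (H ≃g SimpleGraph.cycleGraph 5) ∨ Nonempty (H ≃g K4')

/-- `B` is a nail for `G`: every vertex of `B` has degree at most two in `G`, and every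
dangerous induced subgraph of `G` has at least two `B`-safe special vertices (vertices of
degree two in the subgraph that are in `B` or have degree three in `G`). -/
def IsNail {V : Type} (G : SimpleGraph V) (B : Set V) : Prop :=
  (∀ v ∈ B, degSet G v ≤ 2) ∧
  ∀ S : Set V, IsDangerous (G.induce S) →
    ∃ u v : S, u ≠ v ∧
      degSet (G.induce S) u = 2 ∧ degSet (G.induce S) v = 2 ∧
      ((u : V) ∈ B ∨ degSet G (u : V) = 3) ∧ ((v : V) ∈ B ∨ degSet G (v : V) = 3)

/-- The demand function `f_B`. -/
noncomputable def fB {V : Type} (G : SimpleGraph V) (B : Set V) (v : V) : ℚ :=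
  haveI := Classical.dec (v ∈ B)
  if v ∈ B then ((7 : ℚ) - degSet G v) / 14 else ((8 : ℚ) - degSet G v) / 14

/-- `G` with nail `B` is a minimal counterexample: it is subcubic, triangle-free, has no
`f_B`-coloring, and every subcubic triangle-free graph `G'` with a nail `B'` which has
fewer vertices, or the same number of vertices and a smaller nail, has an `f_{B'}`-coloring. -/
def MinCex {V : Type} [Fintype V] (G : SimpleGraph V) (B : Set V) : Prop :=
  Subcubic G ∧ TriangleFree G ∧ IsNail G B ∧ ¬ HasFColoring G (fB G B) ∧
  ∀ (n : ℕ) (G' : SimpleGraph (Fin n)) (B' : Set (Fin n)),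
    Subcubic G' → TriangleFree G' → IsNail G' B' →
    (n < Fintype.card V ∨ (n = Fintype.card V ∧ B'.ncard < B.ncard)) →
    HasFColoring G' (fB G' B')

/-- `G` is a minimal counterexample with the empty nail: the empty set is a nail for `G`,
`G` is subcubic, triangle-free and has no `f_∅`-coloring, while every smaller subcubic
triangle-free graph with a nail `B'` has an `f_{B'}`-coloring. -/
def MinCexEmpty {V : Type} [Fintype V] (G : SimpleGraph V) : Prop :=
  Subcubic G ∧ TriangleFree G ∧ IsNail G ∅ ∧ ¬ HasFColoring G (fB G ∅) ∧
  ∀ (n : ℕ) (G' : SimpleGraph (Fin n)) (B' : Set (Fin n)),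
    Subcubic G' → TriangleFree G' → IsNail G' B' →
    n < Fintype.card V →
    HasFColoring G' (fB G' B')

/-!
A vertex `v` of degree at most one can be deleted: put its neighbour (if any) into the nail.
The smaller graph is again subcubic and triangle-free, the enlarged set is again a nail because
every vertex whose degree drops is now in it, and no demand decreases.
By minimality the smaller graph is colourable. Shrinking each colour set to exactly its demand,
the neighbour of `v` occupies at most `1/2` of `[0, 1]`, and `v` needs at most
`(8 - deg v) / 14`, which fits in the complement since `deg v ≤ 1`.
-/

open MeasureTheory

theorem lipschitzWith_volume_inter_Iic {A : Set ℝ} (hA : volume A ≠ ⊤) :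
    LipschitzWith 1 fun t => volume.real (A ∩ Set.Iic t) := by
  have hfin : ∀ s, volume (A ∩ Set.Iic s) ≠ ⊤ :=
    fun s => measure_ne_top_of_subset Set.inter_subset_left hA
  refine LipschitzWith.of_le_add fun t s => ?_
  rcases le_total t s with hts | hst
  · have : volume.real (A ∩ Set.Iic t) ≤ volume.real (A ∩ Set.Iic s) :=
      measureReal_mono (by gcongr) (hfin s)
    linarith [dist_nonneg (x := t) (y := s)]
  · have hcover : A ∩ Set.Iic t ⊆ (A ∩ Set.Iic s) ∪ Set.Ioc s t := fun x ⟨hxA, hxt⟩ =>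
      (le_or_gt x s).imp (fun hxs => ⟨hxA, hxs⟩) (fun hsx => ⟨hsx, hxt⟩)
    calc volume.real (A ∩ Set.Iic t)
        ≤ volume.real ((A ∩ Set.Iic s) ∪ Set.Ioc s t) :=
          measureReal_mono hcover (measure_union_ne_top (hfin s) measure_Ioc_lt_top.ne)
      _ ≤ volume.real (A ∩ Set.Iic s) + volume.real (Set.Ioc s t) := measureReal_union_le _ _
      _ = volume.real (A ∩ Set.Iic s) + dist t s := by
        rw [Real.volume_real_Ioc_of_le hst, Real.dist_eq, abs_of_nonneg (by linarith)]

/-- A special case of Sierpiński's theorem on non-atomic measures. -/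
theorem exists_subset_volume_eq {A : Set ℝ} (hA : MeasurableSet A) (hA01 : A ⊆ Set.Icc 0 1)
    {r : ENNReal} (hr : r ≤ volume A) :
    ∃ C ⊆ A, MeasurableSet C ∧ volume C = r := by
  have hAfin : volume A ≠ ⊤ :=
    measure_ne_top_of_subset hA01 (by simp [Real.volume_Icc])
  have hF0 : volume.real (A ∩ Set.Iic 0) = 0 :=
    measureReal_mono_null (s₂ := {0}) (fun x ⟨hxA, hx0⟩ => le_antisymm hx0 (hA01 hxA).1)
      (by simp [measureReal_def]) (by simp)
  have hF1 : A ∩ Set.Iic 1 = A := Set.inter_eq_left.2 fun x hx => (hA01 hx).2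
  have hr01 :
      r.toReal ∈ Set.Icc (volume.real (A ∩ Set.Iic 0)) (volume.real (A ∩ Set.Iic 1)) := by
    rw [hF0, hF1]
    exact ⟨ENNReal.toReal_nonneg, ENNReal.toReal_mono hAfin hr⟩
  obtain ⟨t, -, ht⟩ := intermediate_value_Icc zero_le_one
    (lipschitzWith_volume_inter_Iic hAfin).continuous.continuousOn hr01
  refine ⟨A ∩ Set.Iic t, Set.inter_subset_left, hA.inter measurableSet_Iic, ?_⟩
  dsimp only at ht
  rw [← ENNReal.ofReal_toReal (ne_top_of_le_ne_top hAfin hr), ← ht, measureReal_def,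
    ENNReal.ofReal_toReal (measure_ne_top_of_subset Set.inter_subset_left hAfin)]

open Finset in
/-- Greedy extension: shrink the colour sets of `G.comap g` to their demands, then give `v`
what its neighbours leave of `[0, 1]`. -/
theorem hasFColoring_of_comap {V W : Type} [Fintype W] {G : SimpleGraph V} [DecidableRel G.Adj]
    {v : V} {g : W → V} (hrange : {v}ᶜ ⊆ Set.range g) {f : V → ℚ} {f' : W → ℚ}
    (hcol : HasFColoring (G.comap g) f') (hf' : ∀ x, 0 ≤ f' x) (hle : ∀ x, f (g x) ≤ f' x)
    (hv : f v + ∑ x ∈ univ.filter (fun x => G.Adj v (g x)), f' x ≤ 1) :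
    HasFColoring G f := by
  obtain ⟨φ, hmeas, hsub, hvol, hdisj⟩ := hcol
  choose ψ hψφ hψmeas hψvol using fun x =>
    exists_subset_volume_eq (hmeas x) (hsub x) (ENNReal.ofReal_le_of_le_toReal (hvol x))
  have hψreal : ∀ x, volume.real (ψ x) = f' x := fun x => by
    rw [measureReal_def, hψvol, ENNReal.toReal_ofReal (by exact_mod_cast hf' x)]
  choose pre hpre using fun w (hw : w ∈ ({v}ᶜ : Set V)) => Set.mem_range.1 (hrange hw)
  set N := univ.filter (fun x => G.Adj v (g x))
  set U := ⋃ x ∈ N, ψ x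
  have hUmeas : MeasurableSet U := Finset.measurableSet_biUnion N fun x _ => hψmeas x
  have hU : U ⊆ Set.Icc 0 1 := Set.iUnion₂_subset fun x _ => (hψφ x).trans (hsub x)
  classical
  let χ : V → Set ℝ := fun w => if hw : w = v then Set.Icc 0 1 \ U else ψ (pre w hw)
  have hχ : ∀ w (hw : w ≠ v), χ w = ψ (pre w hw) := fun w hw => dif_neg hw
  have hdisj_of_ne : ∀ a b, G.Adj a b → b ≠ v → χ a ∩ χ b = ∅ := by
    intro a b hab hb
    rw [hχ b hb]
    by_cases ha : a = v
    · subst ha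
      have hbN : pre b hb ∈ N := by simpa [N, hpre b hb] using hab
      simp only [χ, dif_pos rfl]
      exact Set.subset_empty_iff.1 fun y ⟨⟨_, hyU⟩, hyb⟩ => hyU (Set.mem_biUnion hbN hyb)
    · rw [hχ a ha]
      refine Set.subset_empty_iff.1 ((Set.inter_subset_inter (hψφ _) (hψφ _)).trans ?_)
      exact (hdisj _ _ (by simpa [hpre a ha, hpre b hb] using hab)).subset
  refine ⟨χ, fun w => ?_, fun w => ?_, fun w => ?_, fun a b hab => ?_⟩
  · by_cases hw : w = v
    · simp only [χ, dif_pos hw]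
      exact measurableSet_Icc.diff hUmeas
    · rw [hχ w hw]; exact hψmeas _
  · by_cases hw : w = v
    · simp only [χ, dif_pos hw]; exact Set.sdiff_subset
    · rw [hχ w hw]; exact (hψφ _).trans (hsub _)
  · by_cases hw : w = v
    · subst hw
      simp only [χ, dif_pos rfl, ← measureReal_def]
      have hsplit : volume.real (Set.Icc 0 1 \ U) + volume.real (Set.Icc 0 1 ∩ U) =
          volume.real (Set.Icc (0 : ℝ) 1) :=
        measureReal_sdiff_add_inter hUmeas (by simp [Real.volume_Icc])
      have hUsum : volume.real U ≤ ∑ x ∈ N, (f' x : ℝ) :=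
        (measureReal_biUnion_finset_le N ψ).trans (by simp only [hψreal, le_refl])
      rw [Set.inter_eq_right.2 hU, Real.volume_real_Icc_of_le zero_le_one] at hsplit
      have hv' : (f w : ℝ) + ∑ x ∈ N, (f' x : ℝ) ≤ 1 := by exact_mod_cast hv
      linarith
    · rw [hχ w hw, ← measureReal_def, hψreal]
      exact_mod_cast hpre w hw ▸ hle (pre w hw)
  · by_cases hb : b = v
    · rw [Set.inter_comm]
      exact hdisj_of_ne b a hab.symm fun ha => hab.ne (ha.trans hb.symm)
    · exact hdisj_of_ne a b hab hb

section Demand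

variable {V : Type} (G : SimpleGraph V) (B : Set V)

theorem fB_le (v : V) : fB G B v ≤ (8 - degSet G v) / 14 := by
  unfold fB
  split_ifs <;> linarith

variable {G B} in
theorem fB_le_half_of_mem {v : V} (hv : v ∈ B) : fB G B v ≤ 1 / 2 := by
  simp only [fB, if_pos hv]
  linarith [(Nat.cast_nonneg (degSet G v) : (0 : ℚ) ≤ _)]

variable {G} in
theorem Subcubic.fB_nonneg (hG : Subcubic G) (v : V) : 0 ≤ fB G B v := by
  have : (degSet G v : ℚ) ≤ 3 := by exact_mod_cast hG v
  unfold fB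
  split_ifs <;> linarith

end Demand

theorem degSet_iso {W W' : Type} {H : SimpleGraph W} {K : SimpleGraph W'}
    (φ : H ≃g K) (a : W) : degSet K (φ a) = degSet H a := by
  unfold degSet
  rw [← Nat.card_coe_set_eq, ← Nat.card_coe_set_eq]
  exact (Nat.card_congr (φ.mapNeighborSet a)).symm

theorem IsDangerous.of_iso {W W' : Type} {H : SimpleGraph W} {K : SimpleGraph W'}
    (φ : H ≃g K) (hH : IsDangerous H) : IsDangerous K :=
  hH.imp (fun ⟨α⟩ => ⟨φ.symm.trans α⟩) (fun ⟨α⟩ => ⟨φ.symm.trans α⟩)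

noncomputable def induceComapIso {V W : Type} (G : SimpleGraph V) {g : W → V}
    (hg : Function.Injective g) (S : Set W) :
    (G.comap g).induce S ≃g G.induce (g '' S) where
  toEquiv := Equiv.Set.imageOfInjOn g S hg.injOn
  map_rel_iff' := by simp [Equiv.Set.imageOfInjOn]

section Comap

variable {V W : Type} {G : SimpleGraph V} {g : W → V}

theorem degSet_comap (hg : Function.Injective g) (x : W) :
    degSet (G.comap g) x = (G.neighborSet (g x) ∩ Set.range g).ncard := by
  rw [degSet, show (G.comap g).neighborSet x = g ⁻¹' G.neighborSet (g x) from rfl,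
    ← Set.ncard_image_of_injective _ hg, Set.image_preimage_eq_inter_range]

theorem degSet_comap_le [Finite V] (hg : Function.Injective g) (x : W) :
    degSet (G.comap g) x ≤ degSet G (g x) :=
  degSet_comap hg x ▸ Set.ncard_le_ncard Set.inter_subset_left

theorem Subcubic.comap [Finite V] (hG : Subcubic G) (hg : Function.Injective g) :
    Subcubic (G.comap g) :=
  fun x => (degSet_comap_le hg x).trans (hG (g x))

theorem TriangleFree.comap (hG : TriangleFree G) (hg : Function.Injective g) :
    TriangleFree (G.comap g) :=
  CliqueFree.comap (Embedding.comap ⟨g, hg⟩ G).isContained hG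

end Comap

section DeleteVertex

variable {V W : Type} {G : SimpleGraph V} {v : V} {g : W → V}
  (hg : Function.Injective g) (hrange : Set.range g = {v}ᶜ)
include hg hrange

theorem degSet_comap_of_not_adj {x : W} (hx : ¬ G.Adj v (g x)) :
    degSet (G.comap g) x = degSet G (g x) := by
  rw [degSet_comap hg, hrange, ← Set.sdiff_eq, Set.sdiff_singleton_eq_self fun h => hx h.symm]
  rfl

theorem degSet_comap_add_one_of_adj [Finite V] {x : W} (hx : G.Adj v (g x)) :
    degSet (G.comap g) x + 1 = degSet G (g x) := by
  rw [degSet_comap hg, hrange, ← Set.sdiff_eq,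
    Set.ncard_sdiff_singleton_add_one (s := G.neighborSet (g x)) hx.symm]
  rfl

theorem IsNail.comap_of_range_eq_compl [Finite V] {B : Set V} (hB : IsNail G B)
    (hG : Subcubic G) :
    IsNail (G.comap g) (g ⁻¹' (B ∪ G.neighborSet v)) := by
  refine ⟨fun x hx => ?_, fun S hS => ?_⟩
  · rcases hx with hxB | hxN
    · exact (degSet_comap_le hg x).trans (hB.1 _ hxB)
    · have := degSet_comap_add_one_of_adj hg hrange hxN
      have := hG (g x)
      omega
  · let ι := induceComapIso G hg S
    obtain ⟨u₁, u₂, hne, hd₁, hd₂, hs₁, hs₂⟩ := hB.2 _ (hS.of_iso ι)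
    have hsafe : ∀ u : g '' S, ((u : V) ∈ B ∨ degSet G u = 3) →
        ((ι.symm u : W) ∈ g ⁻¹' (B ∪ G.neighborSet v) ∨
          degSet (G.comap g) (ι.symm u : W) = 3) := by
      intro u hu
      have hgu : g (ι.symm u) = u := congrArg Subtype.val (ι.apply_symm_apply u)
      by_cases hadj : G.Adj v (g (ι.symm u))
      · exact Or.inl (Or.inr hadj)
      · rw [Set.mem_preimage, degSet_comap_of_not_adj hg hrange hadj, hgu]
        exact hu.imp Or.inl id
    have hdeg : ∀ u : g '' S,
        degSet ((G.comap g).induce S) (ι.symm u) = degSet (G.induce (g '' S)) u :=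
      fun u => by rw [← degSet_iso ι, ι.apply_symm_apply]
    exact ⟨ι.symm u₁, ι.symm u₂, ι.symm.injective.ne hne, (hdeg u₁).trans hd₁,
      (hdeg u₂).trans hd₂, hsafe u₁ hs₁, hsafe u₂ hs₂⟩

/-- The neighbours of the deleted vertex join the nail, paying for their lost degree. -/
theorem fB_le_fB_comap [Finite V] (B : Set V) (x : W) :
    fB G B (g x) ≤ fB (G.comap g) (g ⁻¹' (B ∪ G.neighborSet v)) x := by
  by_cases hadj : G.Adj v (g x)
  · have hdeg : (degSet (G.comap g) x : ℚ) + 1 = degSet G (g x) := by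
      exact_mod_cast degSet_comap_add_one_of_adj hg hrange hadj
    have hx : x ∈ g ⁻¹' (B ∪ G.neighborSet v) := Or.inr hadj
    simp only [fB, if_pos hx]
    split_ifs <;> linarith
  · have hx : x ∈ g ⁻¹' (B ∪ G.neighborSet v) ↔ g x ∈ B :=
      or_iff_left hadj
    unfold fB
    rw [degSet_comap_of_not_adj hg hrange hadj]
    exact le_of_eq (by congr 1; exact propext hx.symm)

theorem card_filter_adj_comap [Fintype W] [DecidableRel G.Adj] :
    (Finset.univ.filter fun x => G.Adj v (g x)).card = degSet G v := by
  rw [← Set.ncard_coe_finset, Finset.coe_filter_univ, ← Set.ncard_image_of_injective _ hg,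
    show (g '' {x | G.Adj v (g x)}) = g '' (g ⁻¹' G.neighborSet v) from rfl,
    Set.image_preimage_eq_inter_range, hrange, ← Set.sdiff_eq,
    Set.sdiff_singleton_eq_self (G.notMem_neighborSet_self)]
  rfl

end DeleteVertex

theorem exists_fin_injective_range_eq_compl {V : Type} [Fintype V] (v : V) :
    ∃ g : Fin (Fintype.card V - 1) → V, Function.Injective g ∧ Set.range g = {v}ᶜ := by
  classical
  have hcard : Fintype.card ({v}ᶜ : Set V) = Fintype.card V - 1 := by
    rw [Fintype.card_compl_set, Set.card_singleton]
  let e := Fintype.equivFinOfCardEq hcard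
  refine ⟨fun i => e.symm i, Subtype.val_injective.comp e.symm.injective, ?_⟩
  ext w
  exact ⟨fun ⟨i, hi⟩ => hi ▸ (e.symm i).2, fun hw => ⟨e ⟨w, hw⟩, by simp⟩⟩

/-- Lemma 3.4: in a minimal counterexample, every vertex has degree at least two. -/
theorem minCex_min_degree_two {V : Type} [Fintype V] (G : SimpleGraph V)
    (B : Set V) (hG : MinCex G B) :
    ∀ v : V, 2 ≤ degSet G v := by
  classical
  obtain ⟨hsub, htf, hnail, hnocol, hmin⟩ := hG
  intro v
  by_contra! hdeg
  obtain ⟨g, hg, hrange⟩ := exists_fin_injective_range_eq_compl v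
  set B' := g ⁻¹' (B ∪ G.neighborSet v)
  set N := Finset.univ.filter fun x => G.Adj v (g x)
  have hcol : HasFColoring (G.comap g) (fB (G.comap g) B') :=
    hmin _ _ B' (hsub.comap hg) (htf.comap hg) (hnail.comap_of_range_eq_compl hg hrange hsub)
      (Or.inl (Nat.sub_lt (Fintype.card_pos_iff.2 ⟨v⟩) one_pos))
  refine hnocol (hasFColoring_of_comap hrange.ge hcol ((hsub.comap hg).fB_nonneg B')
    (fB_le_fB_comap hg hrange B) ?_)
  have hv : (degSet G v : ℚ) ≤ 1 := by exact_mod_cast Nat.lt_succ_iff.1 hdeg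
  calc fB G B v + ∑ x ∈ N, fB (G.comap g) B' x
      ≤ (8 - degSet G v) / 14 + N.card • (1 / 2 : ℚ) :=
        add_le_add (fB_le G B v) (Finset.sum_le_card_nsmul _ _ _ fun x hx =>
          fB_le_half_of_mem (Or.inr (Finset.mem_filter.1 hx).2))
    _ ≤ 1 := by
        rw [show N.card = degSet G v from card_filter_adj_comap (G := G) hg hrange, nsmul_eq_mul]
        linarith
end
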